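/- arXiv:1404.1963 — 8 statements merged into one kernel-verified Lean document; each statement's English description precedes it below -/
import Mathlib

section
/- If n ≥ 2 and w̄ is a local minimizer of g(w) = (1/2)((1/2)‖w‖² − ν)² + (1/2)wᵀDw − ψᵀw with D = Diag(α₁,...,αₙ), α₁ ≤ α₂ ≤ ... ≤ αₙ, then (1/2)‖w̄‖² − ν + α₂ ≥ 0. -/
/-!
Restricting g to the line s ↦ w̄ + s v, the second difference
g(w̄ + s v) + g(w̄ - s v) - 2 g(w̄) equals B(v) s² + ‖v‖⁴ s⁴ / 4 with
B(v) = ((1/2)‖w̄‖² - ν)‖v‖² + ⟨w̄, v⟩² + vᵀDv, so B(v) ≥ 0 at a local minimizer.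
Take v ≠ 0 in the span of e₁, e₂ and orthogonal to w̄: then vᵀDv ≤ α₂‖v‖²,
hence ((1/2)‖w̄‖² - ν + α₂)‖v‖² ≥ B(v) ≥ 0.
-/

open Finset Filter Topology

theorem IsLocalMin.nonneg_of_second_difference_eq {φ : ℝ → ℝ} (h : IsLocalMin φ 0)
    {b d : ℝ} (hφ : ∀ s, φ s + φ (-s) - 2 * φ 0 = b * s ^ 2 + d * s ^ 4) : 0 ≤ b := by
  have hneg : IsLocalMin (φ ∘ Neg.neg) 0 :=
    (show IsLocalMin φ (-0) by simpa using h).comp_continuous continuous_neg.continuousAt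
  have hquot : ∀ᶠ s in 𝓝[≠] (0 : ℝ), 0 ≤ b + d * s ^ 2 := by
    filter_upwards [nhdsWithin_le_nhds (h.and hneg), self_mem_nhdsWithin]
      with s ⟨hs, hs'⟩ (hs0 : s ≠ 0)
    simp only [Function.comp_apply, neg_zero] at hs'
    have : 0 ≤ (b + d * s ^ 2) * s ^ 2 := by nlinarith [hφ s]
    exact nonneg_of_mul_nonneg_left this (by positivity)
  have hlim : Tendsto (fun s : ℝ => b + d * s ^ 2) (𝓝[≠] 0) (𝓝 b) := by
    have : Continuous (fun s : ℝ => b + d * s ^ 2) := by fun_prop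
    simpa using (this.tendsto 0).mono_left nhdsWithin_le_nhds
  exact ge_of_tendsto hlim hquot

section

variable {ι : Type*} [Fintype ι]

theorem sum_mul_add_mul_sq (c w v : ι → ℝ) (s : ℝ) :
    ∑ i, c i * (w i + s * v i) ^ 2
      = ∑ i, c i * w i ^ 2 + 2 * s * ∑ i, c i * (w i * v i) + s ^ 2 * ∑ i, c i * v i ^ 2 := by
  simp only [mul_sum, ← sum_add_distrib]
  exact sum_congr rfl fun i _ => by ring

theorem sum_mul_add_mul (c w v : ι → ℝ) (s : ℝ) :
    ∑ i, c i * (w i + s * v i) = ∑ i, c i * w i + s * ∑ i, c i * v i := by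
  simp only [mul_sum, ← sum_add_distrib]
  exact sum_congr rfl fun i _ => by ring

theorem sum_mul_sq_le_of_le {c : ℝ} {a v : ι → ℝ} (h : ∀ k, v k ≠ 0 → a k ≤ c) :
    ∑ k, a k * v k ^ 2 ≤ c * ∑ k, v k ^ 2 := by
  rw [mul_sum]
  refine sum_le_sum fun k _ => ?_
  by_cases hk : v k = 0
  · simp [hk]
  · exact mul_le_mul_of_nonneg_right (h k hk) (sq_nonneg _)

theorem sum_sq_pos {v : ι → ℝ} (hv : v ≠ 0) : 0 < ∑ k, v k ^ 2 := by
  obtain ⟨k, hk⟩ : ∃ k, v k ≠ 0 := Function.ne_iff.mp hv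
  exact sum_pos' (fun i _ => sq_nonneg (v i)) ⟨k, mem_univ k, by positivity⟩

theorem exists_ne_zero_sum_mul_eq_zero_of_support_pair [DecidableEq ι] (w : ι → ℝ)
    {i j : ι} (hij : i ≠ j) :
    ∃ v : ι → ℝ, v ≠ 0 ∧ (∀ k, v k ≠ 0 → k = i ∨ k = j) ∧ ∑ k, w k * v k = 0 := by
  by_cases hw : w j = 0
  · refine ⟨Pi.single j 1, by simp, fun k hk => Or.inr ?_, by simp [Pi.single_apply, hw]⟩
    by_contra hkj
    simp [hkj] at hk
  · refine ⟨Pi.single i (w j) - Pi.single j (w i), ?_, fun k hk => ?_, ?_⟩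
    · exact Function.ne_iff.mpr ⟨i, by simp [hij, hw]⟩
    · by_contra hk'
      push Not at hk'
      simp [hk'.1, hk'.2] at hk
    · simp [Pi.single_apply, mul_sub, mul_comm]

noncomputable def quarticObjective (α ψ : ι → ℝ) (ν : ℝ) (w : ι → ℝ) : ℝ :=
  (1/2) * ((1/2) * ∑ i, (w i)^2 - ν)^2 + (1/2) * ∑ i, α i * (w i)^2 - ∑ i, ψ i * w i

variable (α ψ : ι → ℝ) (ν : ℝ)

theorem quarticObjective_second_difference (w v : ι → ℝ) (s : ℝ) :
    quarticObjective α ψ ν (w + s • v) + quarticObjective α ψ ν (w - s • v)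
        - 2 * quarticObjective α ψ ν w
      = (((1/2) * ∑ i, (w i)^2 - ν) * ∑ i, (v i)^2 + (∑ i, w i * v i)^2
          + ∑ i, α i * (v i)^2) * s ^ 2 + ((∑ i, (v i)^2)^2 / 4) * s ^ 4 := by
  have hsq := fun t => by simpa using sum_mul_add_mul_sq 1 w v t
  rw [sub_eq_add_neg w, ← neg_smul]
  simp only [quarticObjective, Pi.add_apply, Pi.smul_apply, smul_eq_mul, hsq,
    sum_mul_add_mul_sq, sum_mul_add_mul]
  ring

theorem IsLocalMin.quarticObjective_hessian_nonneg {w : ι → ℝ}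
    (hmin : IsLocalMin (quarticObjective α ψ ν) w) (v : ι → ℝ) :
    0 ≤ ((1/2) * ∑ i, (w i)^2 - ν) * ∑ i, (v i)^2 + (∑ i, w i * v i)^2
      + ∑ i, α i * (v i)^2 := by
  have hw : IsLocalMin (quarticObjective α ψ ν) (w + (0 : ℝ) • v) := by simpa using hmin
  have hline : IsLocalMin (fun s : ℝ => quarticObjective α ψ ν (w + s • v)) 0 :=
    hw.comp_continuous (g := fun s : ℝ => w + s • v) (by fun_prop)
  exact hline.nonneg_of_second_difference_eq fun s => by
    simpa [sub_eq_add_neg] using quarticObjective_second_difference α ψ ν w v s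

end

theorem stmt1 {n : ℕ} (hn : 2 ≤ n) (α ψ : Fin n → ℝ) (hα : Monotone α) (ν : ℝ)
    (g : (Fin n → ℝ) → ℝ)
    (hg : ∀ w, g w = (1/2) * ((1/2) * ∑ i, (w i)^2 - ν)^2
        + (1/2) * ∑ i, α i * (w i)^2 - ∑ i, ψ i * w i)
    (w : Fin n → ℝ) (hmin : IsLocalMin g w) :
    (1/2) * ∑ j, (w j)^2 - ν + α ⟨1, hn⟩ ≥ 0 := by
  rw [show g = quarticObjective α ψ ν from funext hg] at hmin
  obtain ⟨v, hv, hsupp, horth⟩ := exists_ne_zero_sum_mul_eq_zero_of_support_pair w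
    (i := ⟨0, by omega⟩) (j := ⟨1, hn⟩) (by simp [Fin.ext_iff])
  have hαv : ∀ k, v k ≠ 0 → α k ≤ α ⟨1, hn⟩ := fun k hk => by
    rcases hsupp k hk with rfl | rfl
    · exact hα (by simp [Fin.le_def])
    · exact le_rfl
  have hhess := hmin.quarticObjective_hessian_nonneg α ψ ν v
  rw [horth] at hhess
  have hbound := sum_mul_sq_le_of_le hαv
  refine nonneg_of_mul_nonneg_left ?_ (sum_sq_pos hv)
  linarith
end

section
/- If 2ν − 2α₁ ≤ 0, where α₁ is the smallest diagonal entry of D, then g(w) = (1/2)((1/2)‖w‖² − ν)² + (1/2)wᵀDw − ψᵀw is a convex function on ℝⁿ. -/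
/-!
Expanding the square, `g w = ⅛ ‖w‖⁴ + ½ ∑ᵢ (αᵢ - ν) wᵢ² - ψᵀw + ν²/2`. Since `α` is monotone,
`αᵢ - ν ≥ α₁ - ν ≥ 0`, so the middle term is a nonnegatively weighted sum of squared coordinates;
`‖w‖⁴` is the square of the nonnegative convex function `‖w‖²`, and the rest is affine.
-/

open Finset

theorem ConvexOn.finset_sum {𝕜 E β ι : Type*} [Semiring 𝕜] [PartialOrder 𝕜]
    [AddCommMonoid E] [AddCommMonoid β] [PartialOrder β] [IsOrderedAddMonoid β]
    [SMul 𝕜 E] [Module 𝕜 β] [PosSMulMono 𝕜 β] {s : Set E} (hs : Convex 𝕜 s)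
    (t : Finset ι) {f : ι → E → β} (hf : ∀ i ∈ t, ConvexOn 𝕜 s (f i)) :
    ConvexOn 𝕜 s fun x => ∑ i ∈ t, f i x := by
  classical
  induction t using Finset.induction_on with
  | empty => simpa using convexOn_const (0 : β) hs
  | insert j t hj ih =>
    simp_rw [Finset.sum_insert hj]
    exact (hf j (mem_insert_self j t)).add (ih fun i hi => hf i (mem_insert_of_mem hi))

theorem convexOn_sum_mul {ι : Type*} [Fintype ι] (c : ι → ℝ) :
    ConvexOn ℝ Set.univ fun w : ι → ℝ => ∑ i, c i * w i :=
  ConvexOn.finset_sum convex_univ _ fun i _ =>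
    (c i • LinearMap.proj (R := ℝ) (φ := fun _ : ι => ℝ) i).convexOn convex_univ

theorem convexOn_sum_mul_sq {ι : Type*} [Fintype ι] {c : ι → ℝ} (hc : ∀ i, 0 ≤ c i) :
    ConvexOn ℝ Set.univ fun w : ι → ℝ => ∑ i, c i * w i ^ 2 :=
  ConvexOn.finset_sum convex_univ _ fun i _ =>
    ((even_two.convexOn_pow (𝕜 := ℝ)).comp_linearMap
      (LinearMap.proj (R := ℝ) (φ := fun _ : ι => ℝ) i)).smul (hc i)

theorem convexOn_sq_sum_sq {ι : Type*} [Fintype ι] :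
    ConvexOn ℝ Set.univ fun w : ι → ℝ => (∑ i, w i ^ 2) ^ 2 := by
  have h := (convexOn_sum_mul_sq (c := fun _ : ι => 1) fun _ => zero_le_one).pow
    (fun w _ => sum_nonneg fun i _ => mul_nonneg zero_le_one (sq_nonneg (w i))) 2
  exact h.congr fun w _ => by simp

theorem stmt5 {n : ℕ} (hn : 1 ≤ n) (α ψ : Fin n → ℝ) (hα : Monotone α) (ν : ℝ)
    (hν : 2 * ν - 2 * α ⟨0, hn⟩ ≤ 0)
    (g : (Fin n → ℝ) → ℝ)
    (hg : ∀ w, g w = (1/2) * ((1/2) * ∑ i, (w i)^2 - ν)^2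
        + (1/2) * ∑ i, α i * (w i)^2 - ∑ i, ψ i * w i) :
    ConvexOn ℝ Set.univ g := by
  have hcoef (i : Fin n) : 0 ≤ α i - ν := by
    have := hα (show (⟨0, hn⟩ : Fin n) ≤ i from Nat.zero_le i)
    linarith
  have hsplit (w : Fin n → ℝ) :
      ∑ i, α i * w i ^ 2 = ∑ i, (α i - ν) * w i ^ 2 + ν * ∑ i, w i ^ 2 := by
    rw [mul_sum, ← sum_add_distrib]
    exact sum_congr rfl fun i _ => by ring
  have hconv := (((convexOn_sq_sum_sq.smul (by norm_num : (0:ℝ) ≤ 1/8)).add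
    ((convexOn_sum_mul_sq hcoef).smul (by norm_num : (0:ℝ) ≤ 1/2))).add
    (convexOn_sum_mul (-ψ))).add_const (ν ^ 2 / 2)
  refine hconv.congr fun w _ => ?_
  simp only [Pi.add_apply, Pi.neg_apply, neg_mul, sum_neg_distrib, smul_eq_mul, hg w, hsplit]
  ring
end

section
/- g has a local non-global minimizer if and only if there exists t* in the open interval (max{2ν−2α₂, 0}, 2ν−2α₁) such that h(t*) = 0 and h'(t*) > 0, where h(t) = Σᵢ 4ψᵢ²/(t − 2ν + 2αᵢ)² − t; moreover in that case the local non-global minimizer is the point w with wᵢ = 2ψᵢ/(t* − 2ν + 2αᵢ). -/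
/-!
Put `c i = ‖w‖² / 2 - ν + α i`, the diagonal of `D + μ I` with `μ = ‖w‖² / 2 - ν`. Expanding the
quartic gives, for all `v`, `w`,
`g v - g w = ⟪(D + μ I) w - ψ, v - w⟫ + ½ ∑ c i (v i - w i)² + ⅛ (‖v‖² - ‖w‖²)²`.
Hence a critical point with `c ≥ 0` is a global minimizer, while at a local non-global minimizer
`c` has exactly one negative entry, the one at the smallest `α i` (if also `c` at the second
smallest were `≤ 0`, the Hessian `diag c + w wᵀ` or a rotation of `w` on its sphere would give
descent). For such `c` the Hessian is positive semidefinite iff `∑ w i² / c i ≤ -1`. Equality is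
excluded by the cubic term along `w / c`, and the strict inequality suffices: it persists at the
midpoint `(v + w) / 2`, which turns the expansion above into a nonnegative Hessian form near `w`.
With `t = ‖w‖²`, criticality says `w i = 2 ψ i / (t - 2 ν + 2 α i)`, and then `h t = ‖w‖² - t`
and `h' t = -1 - ∑ w i² / c i`.
-/

open Finset Filter Topology

section LocalMinCriteria

variable {E β : Type*} [TopologicalSpace E] [Preorder β]

theorem not_isLocalMin_of_curve {f : E → β} {w : E} {γ : ℝ → E} (hγ : ContinuousAt γ 0)
    (hγ₀ : γ 0 = w) (hlt : ∀ᶠ x in 𝓝[>] 0, f (γ x) < f w) : ¬ IsLocalMin f w := by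
  intro hw
  have hle : ∀ᶠ x in 𝓝[>] 0, f w ≤ f (γ x) := by
    rw [← hγ₀] at hw ⊢
    exact nhdsWithin_le_nhds (hw.comp_continuous hγ)
  obtain ⟨x, hxle, hxlt⟩ := (hle.and hlt).exists
  exact lt_irrefl _ (hxle.trans_lt hxlt)

theorem eventually_pow_mul_neg (k : ℕ) {p : ℝ → ℝ} (hp : ContinuousAt p 0) (hp₀ : p 0 < 0) :
    ∀ᶠ x in 𝓝[>] 0, x ^ k * p x < 0 := by
  filter_upwards [self_mem_nhdsWithin, nhdsWithin_le_nhds (hp.eventually (gt_mem_nhds hp₀))]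
    with x hx hpx
  exact mul_neg_of_pos_of_neg (pow_pos hx k) hpx

end LocalMinCriteria

-- The two directions of `sum_sq_div_le_neg_one_iff` with the index `i₀` split off:
-- `B = ∑ u i ^ 2 / c i`, `T = ∑ c i * z i ^ 2`, `R = ∑ u i * z i` over `i ≠ i₀`.
theorem nonneg_of_sq_div_add_le_neg_one {c₀ u₀ z₀ B T R : ℝ} (hc₀ : c₀ < 0) (hB : 0 ≤ B)
    (hT : 0 ≤ T) (hR : R ^ 2 ≤ B * T) (hsec : u₀ ^ 2 / c₀ + B ≤ -1) :
    0 ≤ c₀ * z₀ ^ 2 + T + (u₀ * z₀ + R) ^ 2 := by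
  have hu₀ : (1 + B) * -c₀ ≤ u₀ ^ 2 := by
    rw [div_add' _ _ _ hc₀.ne, div_le_iff_of_neg hc₀] at hsec
    linarith
  rcases hB.eq_or_lt with rfl | hB
  · have hR0 : R = 0 := by nlinarith
    subst hR0
    nlinarith [sq_nonneg z₀]
  · have h₁ : B * (-(u₀ * z₀) ^ 2) ≤ B * ((1 + B) * c₀ * z₀ ^ 2) := by
      apply mul_le_mul_of_nonneg_left _ hB.le
      nlinarith [mul_le_mul_of_nonneg_right hu₀ (sq_nonneg z₀)]
    have h₂ : (1 + B) * R ^ 2 ≤ (1 + B) * (B * T) := mul_le_mul_of_nonneg_left hR (by linarith)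
    -- `B (1 + B)` times the goal is at least `(a - (1 + B) (a + R))²`, where `a = u₀ z₀`
    have key : 0 ≤ B * (1 + B) * (c₀ * z₀ ^ 2 + T + (u₀ * z₀ + R) ^ 2) := by
      nlinarith [sq_nonneg (u₀ * z₀ - (1 + B) * (u₀ * z₀ + R))]
    exact nonneg_of_mul_nonneg_right key (by positivity)

theorem sq_div_add_le_neg_one_of_forall {c₀ u₀ B : ℝ} (hc₀ : c₀ < 0) (hB : 0 ≤ B)
    (h : ∀ τ, 0 ≤ c₀ * τ ^ 2 + B + (u₀ * τ + B) ^ 2) : u₀ ^ 2 / c₀ + B ≤ -1 := by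
  rw [div_add' _ _ _ hc₀.ne, div_le_iff_of_neg hc₀]
  rcases hB.eq_or_lt with rfl | hB
  · linarith [h 1]
  · have hdisc := discrim_le_zero (a := c₀ + u₀ ^ 2) (b := 2 * u₀ * B) (c := B * (1 + B))
      fun τ => by linarith [h τ]
    rw [discrim] at hdisc
    nlinarith

theorem ne_zero_of_neg_of_pos {ι : Type*} {c : ι → ℝ} {i₀ : ι} (hc₀ : c i₀ < 0)
    (hc : ∀ i ≠ i₀, 0 < c i) (i : ι) : c i ≠ 0 := by
  by_cases h : i = i₀
  · exact h ▸ hc₀.ne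
  · exact (hc i h).ne'

section Quartic

variable {ι : Type*} [Fintype ι]

theorem sum_sq_div_le_neg_one_iff [DecidableEq ι] {c u : ι → ℝ} {i₀ : ι} (hc₀ : c i₀ < 0)
    (hc : ∀ i ≠ i₀, 0 < c i) :
    ∑ i, u i ^ 2 / c i ≤ -1 ↔ ∀ z : ι → ℝ, 0 ≤ ∑ i, c i * z i ^ 2 + (∑ i, u i * z i) ^ 2 := by
  have split (f : ι → ℝ) : ∑ i, f i = f i₀ + ∑ i ∈ univ.erase i₀, f i :=
    (add_sum_erase _ _ (mem_univ i₀)).symm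
  have hB : 0 ≤ ∑ i ∈ univ.erase i₀, u i ^ 2 / c i :=
    sum_nonneg fun i hi => div_nonneg (sq_nonneg _) (hc i (ne_of_mem_erase hi)).le
  rw [split]
  constructor
  · intro hsec z
    rw [split, split (fun i => u i * z i)]
    refine nonneg_of_sq_div_add_le_neg_one hc₀ hB
      (sum_nonneg fun i hi => mul_nonneg (hc i (ne_of_mem_erase hi)).le (sq_nonneg _)) ?_ hsec
    refine sum_sq_le_sum_mul_sum_of_sq_le_mul _
      (fun i hi => div_nonneg (sq_nonneg _) (hc i (ne_of_mem_erase hi)).le)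
      (fun i hi => mul_nonneg (hc i (ne_of_mem_erase hi)).le (sq_nonneg _)) fun i hi => ?_
    have := (hc i (ne_of_mem_erase hi)).ne'
    exact le_of_eq (by field_simp)
  · intro hQ
    refine sq_div_add_le_neg_one_of_forall hc₀ hB fun τ => ?_
    have hτ := hQ fun i => if i = i₀ then τ else u i / c i
    have e₁ : ∑ i ∈ univ.erase i₀, c i * (if i = i₀ then τ else u i / c i) ^ 2 =
        ∑ i ∈ univ.erase i₀, u i ^ 2 / c i :=
      sum_congr rfl fun i hi => by
        have := (hc i (ne_of_mem_erase hi)).ne'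
        rw [if_neg (ne_of_mem_erase hi)]
        field_simp
    have e₂ : ∑ i ∈ univ.erase i₀, u i * (if i = i₀ then τ else u i / c i) =
        ∑ i ∈ univ.erase i₀, u i ^ 2 / c i :=
      sum_congr rfl fun i hi => by rw [if_neg (ne_of_mem_erase hi)]; ring
    rwa [split, split (fun i => u i * _), e₁, e₂, if_pos rfl] at hτ

noncomputable def quarticFun (α ψ : ι → ℝ) (ν : ℝ) (w : ι → ℝ) : ℝ :=
  1 / 2 * (1 / 2 * ∑ i, w i ^ 2 - ν) ^ 2 + 1 / 2 * ∑ i, α i * w i ^ 2 - ∑ i, ψ i * w i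

noncomputable def shiftedDiag (α : ι → ℝ) (ν : ℝ) (w : ι → ℝ) (i : ι) : ℝ :=
  (∑ j, w j ^ 2) / 2 - ν + α i

variable {α ψ : ι → ℝ} {ν : ℝ} {w : ι → ℝ}

theorem quarticFun_sub (v w : ι → ℝ) :
    quarticFun α ψ ν v - quarticFun α ψ ν w =
      ∑ i, (shiftedDiag α ν w i * w i - ψ i) * (v i - w i)
        + 1 / 2 * ∑ i, shiftedDiag α ν w i * (v i - w i) ^ 2
        + 1 / 8 * (∑ i, v i ^ 2 - ∑ i, w i ^ 2) ^ 2 := by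
  simp only [quarticFun, shiftedDiag, add_mul, sub_mul, mul_sub, sub_sq, mul_add, two_mul, ← sq,
    mul_comm (w _) (v _), sum_add_distrib, sum_sub_distrib, mul_assoc, ← mul_sum]
  ring

theorem quarticFun_add_smul (w z : ι → ℝ) (x : ℝ) :
    quarticFun α ψ ν (w + x • z) - quarticFun α ψ ν w =
      x * ∑ i, (shiftedDiag α ν w i * w i - ψ i) * z i
        + x ^ 2 / 2 * (∑ i, shiftedDiag α ν w i * z i ^ 2
          + (∑ i, w i * z i + x / 2 * ∑ i, z i ^ 2) ^ 2) := by
  simp only [quarticFun_sub, Pi.add_apply, Pi.smul_apply, smul_eq_mul, add_sub_cancel_left, add_sq,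
    mul_pow, sum_add_distrib, mul_left_comm _ x, mul_left_comm _ (x ^ 2), ← mul_sum, mul_assoc]
  ring

theorem quarticFun_sub_of_critical (hcrit : ∀ i, shiftedDiag α ν w i * w i = ψ i)
    (v : ι → ℝ) :
    quarticFun α ψ ν v - quarticFun α ψ ν w =
      1 / 2 * ∑ i, shiftedDiag α ν w i * (v i - w i) ^ 2
        + 1 / 8 * (∑ i, v i ^ 2 - ∑ i, w i ^ 2) ^ 2 := by
  simp only [quarticFun_sub, hcrit, sub_self, zero_mul, sum_const_zero, zero_add]

theorem quarticFun_le_of_critical (hcrit : ∀ i, shiftedDiag α ν w i * w i = ψ i)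
    (hc : ∀ i, 0 ≤ shiftedDiag α ν w i) (v : ι → ℝ) :
    quarticFun α ψ ν w ≤ quarticFun α ψ ν v := by
  rw [← sub_nonneg, quarticFun_sub_of_critical hcrit]
  have := sum_nonneg fun i (_ : i ∈ univ) => mul_nonneg (hc i) (sq_nonneg (v i - w i))
  positivity

theorem critical_of_isLocalMin (hw : IsLocalMin (quarticFun α ψ ν) w) :
    ∀ i, shiftedDiag α ν w i * w i = ψ i := by
  set r := fun i => shiftedDiag α ν w i * w i - ψ i
  suffices ∑ i, r i ^ 2 = 0 by
    intro i
    have := (sum_eq_zero_iff_of_nonneg fun i _ => sq_nonneg (r i)).1 this i (mem_univ i)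
    simpa [r, sub_eq_zero] using this
  by_contra hne
  have hpos : 0 < ∑ i, r i ^ 2 := (sum_nonneg fun i _ => sq_nonneg (r i)).lt_of_ne' hne
  -- descend along the negative gradient `-r`
  refine not_isLocalMin_of_curve (γ := fun x => w + x • -r) (by fun_prop) (by simp)
    ((eventually_pow_mul_neg 1 (p := fun x => -∑ i, r i ^ 2 + x / 2 *
      (∑ i, shiftedDiag α ν w i * r i ^ 2 + (-∑ i, w i * r i + x / 2 * ∑ i, r i ^ 2) ^ 2))
      (by fun_prop) (by simpa using hpos)).mono fun x hx => ?_) hw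
  have := quarticFun_add_smul (α := α) (ψ := ψ) (ν := ν) w (-r) x
  simp only [Pi.neg_apply, mul_neg, sum_neg_distrib, neg_sq] at this
  rw [show ∑ i, (shiftedDiag α ν w i * w i - ψ i) * r i = ∑ i, r i ^ 2 from
    sum_congr rfl fun i _ => (sq (r i)).symm] at this
  linarith

theorem hessian_nonneg_of_isLocalMin (hw : IsLocalMin (quarticFun α ψ ν) w) (z : ι → ℝ) :
    0 ≤ ∑ i, shiftedDiag α ν w i * z i ^ 2 + (∑ i, w i * z i) ^ 2 := by
  by_contra! hneg
  have hcrit := critical_of_isLocalMin hw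
  refine not_isLocalMin_of_curve (γ := fun x => w + x • z) (by fun_prop) (by simp)
    ((eventually_pow_mul_neg 2 (p := fun x => (∑ i, shiftedDiag α ν w i * z i ^ 2 +
      (∑ i, w i * z i + x / 2 * ∑ i, z i ^ 2) ^ 2) / 2) (by fun_prop)
      (by simp only [zero_div, zero_mul, add_zero]; linarith)).mono fun x hx => ?_) hw
  have := quarticFun_add_smul (α := α) (ψ := ψ) (ν := ν) w z x
  simp only [hcrit, sub_self, zero_mul, sum_const_zero, mul_zero, zero_add] at this
  linarith

theorem shiftedDiag_neg_of_not_forall_le {i₀ : ι} (h₀ : ∀ i, α i₀ ≤ α i)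
    (hcrit : ∀ i, shiftedDiag α ν w i * w i = ψ i)
    (hng : ¬ ∀ v, quarticFun α ψ ν w ≤ quarticFun α ψ ν v) : shiftedDiag α ν w i₀ < 0 := by
  by_contra! hc₀
  exact hng <| quarticFun_le_of_critical hcrit fun i => hc₀.trans (by simp [shiftedDiag, h₀ i])

theorem not_isLocalMin_of_rotation [DecidableEq ι] {i₀ i₁ : ι} (hi : i₁ ≠ i₀)
    (hcrit : ∀ i, shiftedDiag α ν w i * w i = ψ i) (hc₀ : shiftedDiag α ν w i₀ < 0)
    (hc₁ : shiftedDiag α ν w i₁ ≤ 0) (hw₀ : w i₀ ≠ 0) (hw₁ : w i₁ = 0) :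
    ¬ IsLocalMin (quarticFun α ψ ν) w := by
  -- rotating `w` in the `(i₀, i₁)`-plane keeps `‖w‖`, so the quartic term vanishes
  set γ : ℝ → ι → ℝ := fun θ i =>
    if i = i₀ then w i₀ * Real.cos θ else if i = i₁ then w i₀ * Real.sin θ else w i
  have hpair (θ : ℝ) (f : ι → ℝ → ℝ → ℝ) (hf : ∀ i, f i (w i) (w i) = 0) :
      ∑ i, f i (γ θ i) (w i) = f i₀ (w i₀ * Real.cos θ) (w i₀) + f i₁ (w i₀ * Real.sin θ) 0 := by
    rw [Fintype.sum_eq_add i₀ i₁ hi.symm fun i ⟨h₀, h₁⟩ => by simp [γ, h₀, h₁, hf]]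
    simp [γ, hi, hw₁]
  refine not_isLocalMin_of_curve (γ := γ) ?_ ?_ ?_
  · exact continuous_pi (fun i => by dsimp only [γ]; split_ifs <;> fun_prop) |>.continuousAt
  · ext i
    by_cases h₀ : i = i₀
    · simp [γ, h₀]
    by_cases h₁ : i = i₁ <;> simp [γ, h₀, h₁, hw₁, hi]
  filter_upwards [Ioo_mem_nhdsGT Real.pi_pos] with θ ⟨hθ₀, hθπ⟩
  have hcos : Real.cos θ < 1 := by
    simpa using Real.cos_lt_cos_of_nonneg_of_le_pi le_rfl hθπ.le hθ₀
  have hnorm : ∑ i, γ θ i ^ 2 - ∑ i, w i ^ 2 = 0 := by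
    rw [← sum_sub_distrib, hpair θ (fun _ a b => a ^ 2 - b ^ 2) (fun _ => sub_self _)]
    linear_combination w i₀ ^ 2 * Real.cos_sq_add_sin_sq θ
  have hquad := hpair θ (fun i a b => shiftedDiag α ν w i * (a - b) ^ 2) (by simp)
  have := quarticFun_sub_of_critical hcrit (γ θ)
  rw [hquad, hnorm] at this
  nlinarith [mul_pos (mul_pos (neg_pos.2 hc₀) (sq_pos_of_ne_zero hw₀))
    (sq_pos_of_pos (sub_pos.2 hcos)),
    mul_nonpos_of_nonpos_of_nonneg hc₁ (sq_nonneg (w i₀ * Real.sin θ - 0))]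

theorem shiftedDiag_pos_of_isLocalMin [DecidableEq ι] {i₀ i₁ : ι} (hi : i₁ ≠ i₀)
    (hw : IsLocalMin (quarticFun α ψ ν) w) (hc₀ : shiftedDiag α ν w i₀ < 0) :
    0 < shiftedDiag α ν w i₁ := by
  have hQ := hessian_nonneg_of_isLocalMin hw
  have hw₀ : w i₀ ≠ 0 := by
    have := hQ (Pi.single i₀ 1)
    simp only [Pi.single_apply, ite_pow, one_pow, ne_eq, OfNat.ofNat_ne_zero, not_false_eq_true,
      zero_pow, mul_ite, mul_one, mul_zero, sum_ite_eq', mem_univ, ↓reduceIte] at this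
    intro h
    nlinarith
  by_contra! hc₁
  by_cases hw₁ : w i₁ = 0
  · exact not_isLocalMin_of_rotation hi (critical_of_isLocalMin hw) hc₀ hc₁ hw₀ hw₁ hw
  · have := hQ fun i => if i = i₀ then -w i₁ else if i = i₁ then w i₀ else 0
    rw [Fintype.sum_eq_add i₀ i₁ hi.symm fun i ⟨h₀, h₁⟩ => by simp [h₀, h₁],
      Fintype.sum_eq_add i₀ i₁ hi.symm fun i ⟨h₀, h₁⟩ => by simp [h₀, h₁]] at this
    simp only [if_pos, if_neg hi] at this
    nlinarith [mul_pos (neg_pos.2 hc₀) (sq_pos_of_ne_zero hw₁),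
      mul_nonpos_of_nonpos_of_nonneg hc₁ (sq_nonneg (w i₀))]

theorem sum_sq_div_lt_neg_one_of_isLocalMin [DecidableEq ι] {i₀ : ι}
    (hw : IsLocalMin (quarticFun α ψ ν) w) (hc₀ : shiftedDiag α ν w i₀ < 0)
    (hc : ∀ i ≠ i₀, 0 < shiftedDiag α ν w i) :
    ∑ i, w i ^ 2 / shiftedDiag α ν w i < -1 := by
  set c := shiftedDiag α ν w
  refine ((sum_sq_div_le_neg_one_iff hc₀ hc).2 (hessian_nonneg_of_isLocalMin hw)).lt_of_ne
    fun hsec => ?_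
  -- at equality the Hessian degenerates along `w / c`, where the cubic term is negative
  set z := fun i => w i / c i
  have hc' := ne_zero_of_neg_of_pos hc₀ hc
  have hs : ∑ i, w i * z i = -1 := hsec ▸ sum_congr rfl fun i _ => by ring
  have hq : ∑ i, c i * z i ^ 2 = -1 :=
    hsec ▸ sum_congr rfl fun i _ => by have := hc' i; simp only [z]; field_simp
  have hZ : 0 < ∑ i, z i ^ 2 := by
    refine (sum_nonneg fun i _ => sq_nonneg (z i)).lt_of_ne' fun hZ => ?_
    have := (sum_eq_zero_iff_of_nonneg fun i _ => sq_nonneg (z i)).1 hZ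
    simp_all
  refine not_isLocalMin_of_curve (γ := fun x => w + x • z) (by fun_prop) (by simp)
    ((eventually_pow_mul_neg 3 (p := fun x => (-∑ i, z i ^ 2 + x / 4 * (∑ i, z i ^ 2) ^ 2) / 2)
      (by fun_prop) (by simp only [zero_div, zero_mul, add_zero]; linarith)).mono fun x hx => ?_) hw
  have := quarticFun_add_smul (α := α) (ψ := ψ) (ν := ν) w z x
  simp only [critical_of_isLocalMin hw, sub_self, zero_mul, sum_const_zero, mul_zero,
    zero_add] at this
  rw [hs, hq] at this
  linarith

theorem ne_zero_of_sum_sq_div_lt_neg_one {c u : ι → ℝ} {i₀ : ι} (hc : ∀ i ≠ i₀, 0 < c i)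
    (hsec : ∑ i, u i ^ 2 / c i < -1) : u i₀ ≠ 0 := by
  intro h
  have : 0 ≤ ∑ i, u i ^ 2 / c i := sum_nonneg fun i _ => by
    by_cases hi : i = i₀
    · simp [hi, h]
    · exact div_nonneg (sq_nonneg _) (hc i hi).le
  linarith

theorem isLocalMin_quarticFun [DecidableEq ι] {i₀ : ι}
    (hcrit : ∀ i, shiftedDiag α ν w i * w i = ψ i) (hc₀ : shiftedDiag α ν w i₀ < 0)
    (hc : ∀ i ≠ i₀, 0 < shiftedDiag α ν w i) (hsec : ∑ i, w i ^ 2 / shiftedDiag α ν w i < -1) :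
    IsLocalMin (quarticFun α ψ ν) w := by
  -- `‖v‖² - ‖w‖² = 2 ⟪(v + w) / 2, v - w⟫`, and the secular inequality persists at `(v + w) / 2`
  have hmid : ∀ᶠ v in 𝓝 w, ∑ i, ((v i + w i) / 2) ^ 2 / shiftedDiag α ν w i ≤ -1 := by
    have hcont : Continuous fun v : ι → ℝ => ∑ i, ((v i + w i) / 2) ^ 2 / shiftedDiag α ν w i := by
      fun_prop
    exact hcont.continuousAt.eventually (ge_mem_nhds (by simpa using hsec))
  filter_upwards [hmid] with v hv
  have hQ := (sum_sq_div_le_neg_one_iff hc₀ hc).1 hv (v - w)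
  have hnorm : ∑ i, v i ^ 2 - ∑ i, w i ^ 2 = 2 * ∑ i, (v i + w i) / 2 * (v - w) i := by
    rw [mul_sum, ← sum_sub_distrib]
    exact sum_congr rfl fun i _ => by simp only [Pi.sub_apply]; ring
  have := quarticFun_sub_of_critical hcrit v
  rw [hnorm] at this
  simp only [Pi.sub_apply] at hQ this
  nlinarith

theorem not_forall_le_of_shiftedDiag_neg [DecidableEq ι] {i₀ : ι}
    (hcrit : ∀ i, shiftedDiag α ν w i * w i = ψ i) (hc₀ : shiftedDiag α ν w i₀ < 0)
    (hw₀ : w i₀ ≠ 0) : ¬ ∀ v, quarticFun α ψ ν w ≤ quarticFun α ψ ν v := by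
  intro hmin
  set v : ι → ℝ := fun i => if i = i₀ then -w i else w i
  have hnorm : ∑ i, v i ^ 2 = ∑ i, w i ^ 2 := sum_congr rfl fun i _ => by
    simp only [v]; split_ifs <;> ring
  have hquad : ∑ i, shiftedDiag α ν w i * (v i - w i) ^ 2 =
      shiftedDiag α ν w i₀ * (2 * w i₀) ^ 2 := by
    rw [Fintype.sum_eq_single i₀ fun i hi => by simp [v, hi]]
    simp only [v, if_pos]
    ring
  have := quarticFun_sub_of_critical hcrit v
  rw [hnorm, hquad, sub_self] at this
  nlinarith [hmin v, mul_pos (neg_pos.2 hc₀) (sq_pos_of_ne_zero hw₀)]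

noncomputable def secularFun (α ψ : ι → ℝ) (ν t : ℝ) : ℝ :=
  ∑ i, 4 * ψ i ^ 2 / (t - 2 * ν + 2 * α i) ^ 2 - t

theorem hasDerivAt_secularFun {t : ℝ} (hd : ∀ i, t - 2 * ν + 2 * α i ≠ 0) :
    HasDerivAt (secularFun α ψ ν) (-(∑ i, 8 * ψ i ^ 2 / (t - 2 * ν + 2 * α i) ^ 3) - 1) t := by
  have hterm (i : ι) : HasDerivAt (fun s => 4 * ψ i ^ 2 / (s - 2 * ν + 2 * α i) ^ 2)
      (-(8 * ψ i ^ 2 / (t - 2 * ν + 2 * α i) ^ 3)) t := by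
    have hlin : HasDerivAt (fun s => s - 2 * ν + 2 * α i) 1 t :=
      ((hasDerivAt_id' t).sub_const _).add_const _
    refine ((hasDerivAt_const t (4 * ψ i ^ 2)).fun_div (hlin.fun_pow 2)
      (pow_ne_zero 2 (hd i))).congr_deriv ?_
    have := hd i
    field_simp
    ring
  exact ((HasDerivAt.fun_sum fun i _ => hterm i).sub (hasDerivAt_id' t)).congr_deriv
    (by rw [sum_neg_distrib])

theorem secularFun_eq_and_deriv {t : ℝ} (hw : ∀ i, (t / 2 - ν + α i) * w i = ψ i)
    (hd : ∀ i, t / 2 - ν + α i ≠ 0) :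
    secularFun α ψ ν t = ∑ i, w i ^ 2 - t ∧
      deriv (secularFun α ψ ν) t = -∑ i, w i ^ 2 / (t / 2 - ν + α i) - 1 := by
  have hdouble (i : ι) : t - 2 * ν + 2 * α i = 2 * (t / 2 - ν + α i) := by ring
  refine ⟨?_, ?_⟩
  · rw [secularFun]
    congr 1
    refine sum_congr rfl fun i _ => ?_
    rw [← hw i, hdouble]
    have := hd i
    generalize t / 2 - ν + α i = c at this ⊢
    field_simp
    ring
  · rw [(hasDerivAt_secularFun fun i => hdouble i ▸ mul_ne_zero two_ne_zero (hd i)).deriv]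
    congr 2
    refine sum_congr rfl fun i _ => ?_
    rw [← hw i, hdouble]
    have := hd i
    generalize t / 2 - ν + α i = c at this ⊢
    field_simp
    ring

theorem exists_secularFun_root_of_isLocalMin [DecidableEq ι] {i₀ i₁ : ι} (hi : i₁ ≠ i₀)
    (h₀ : ∀ i, α i₀ ≤ α i) (h₁ : ∀ i ≠ i₀, α i₁ ≤ α i) (hw : IsLocalMin (quarticFun α ψ ν) w)
    (hng : ¬ ∀ v, quarticFun α ψ ν w ≤ quarticFun α ψ ν v) :
    ∃ t, 0 < t ∧ t / 2 - ν + α i₀ < 0 ∧ 0 < t / 2 - ν + α i₁ ∧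
      secularFun α ψ ν t = 0 ∧ 0 < deriv (secularFun α ψ ν) t := by
  have hcrit := critical_of_isLocalMin hw
  have hc₀ := shiftedDiag_neg_of_not_forall_le h₀ hcrit hng
  have hc₁ := shiftedDiag_pos_of_isLocalMin hi hw hc₀
  have hc : ∀ i ≠ i₀, 0 < shiftedDiag α ν w i :=
    fun i hi => hc₁.trans_le (by simp [shiftedDiag, h₁ i hi])
  have hsec := sum_sq_div_lt_neg_one_of_isLocalMin hw hc₀ hc
  obtain ⟨hval, hderiv⟩ := secularFun_eq_and_deriv hcrit (ne_zero_of_neg_of_pos hc₀ hc)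
  refine ⟨∑ i, w i ^ 2, ?_, hc₀, hc₁, by rw [hval, sub_self], ?_⟩
  · exact (sq_pos_of_ne_zero (ne_zero_of_sum_sq_div_lt_neg_one hc hsec)).trans_le
      (single_le_sum (fun i _ => sq_nonneg (w i)) (mem_univ i₀))
  · rw [hderiv]
    linarith [show ∑ i, w i ^ 2 / ((∑ j, w j ^ 2) / 2 - ν + α i) < -1 from hsec]

theorem isLocalMin_and_not_forall_le_of_secularFun [DecidableEq ι] {i₀ : ι} {t : ℝ}
    (hc₀ : t / 2 - ν + α i₀ < 0) (hc : ∀ i ≠ i₀, 0 < t / 2 - ν + α i)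
    (h0 : secularFun α ψ ν t = 0) (h1 : 0 < deriv (secularFun α ψ ν) t) :
    IsLocalMin (quarticFun α ψ ν) (fun i => 2 * ψ i / (t - 2 * ν + 2 * α i)) ∧
      ¬ ∀ v, quarticFun α ψ ν (fun i => 2 * ψ i / (t - 2 * ν + 2 * α i)) ≤ quarticFun α ψ ν v := by
  have hd := ne_zero_of_neg_of_pos (c := fun i => t / 2 - ν + α i) hc₀ hc
  set w := fun i => 2 * ψ i / (t - 2 * ν + 2 * α i)
  have hw (i : ι) : (t / 2 - ν + α i) * w i = ψ i := by
    have : t - 2 * ν + 2 * α i ≠ 0 := fun h => hd i (by linarith)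
    simp only [w]
    field_simp
  obtain ⟨hval, hderiv⟩ := secularFun_eq_and_deriv hw hd
  have hdiag (i : ι) : shiftedDiag α ν w i = t / 2 - ν + α i := by
    rw [shiftedDiag, show ∑ i, w i ^ 2 = t by linarith]
  simp only [← hdiag] at hw hc₀ hc hderiv
  have hsec : ∑ i, w i ^ 2 / shiftedDiag α ν w i < -1 := by linarith
  exact ⟨isLocalMin_quarticFun hw hc₀ hc hsec,
    not_forall_le_of_shiftedDiag_neg hw hc₀ (ne_zero_of_sum_sq_div_lt_neg_one hc hsec)⟩

end Quartic

theorem stmt9 {n : ℕ} (hn : 2 ≤ n) (α ψ : Fin n → ℝ) (hα : Monotone α) (ν : ℝ)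
    (g : (Fin n → ℝ) → ℝ)
    (hg : ∀ w, g w = (1/2) * ((1/2) * ∑ i, (w i)^2 - ν)^2
        + (1/2) * ∑ i, α i * (w i)^2 - ∑ i, ψ i * w i)
    (h : ℝ → ℝ)
    (hh : ∀ t, h t = (∑ i, 4 * (ψ i)^2 / (t - 2 * ν + 2 * α i)^2) - t) :
    ((∃ w : Fin n → ℝ, IsLocalMin g w ∧ ¬ ∀ v, g w ≤ g v) ↔
      (∃ t ∈ Set.Ioo (max (2 * ν - 2 * α ⟨1, hn⟩) 0) (2 * ν - 2 * α ⟨0, by omega⟩),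
        h t = 0 ∧ 0 < deriv h t)) ∧
    (∀ t ∈ Set.Ioo (max (2 * ν - 2 * α ⟨1, hn⟩) 0) (2 * ν - 2 * α ⟨0, by omega⟩),
      h t = 0 → 0 < deriv h t →
        IsLocalMin g (fun i => 2 * ψ i / (t - 2 * ν + 2 * α i)) ∧
        ¬ ∀ v, g (fun i => 2 * ψ i / (t - 2 * ν + 2 * α i)) ≤ g v) := by
  obtain rfl : g = quarticFun α ψ ν := funext hg
  obtain rfl : h = secularFun α ψ ν := funext hh
  set i₀ : Fin n := ⟨0, by omega⟩
  set i₁ : Fin n := ⟨1, hn⟩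
  have hi : i₁ ≠ i₀ := by simp [i₀, i₁]
  have h₁ (i : Fin n) (hi : i ≠ i₀) : α i₁ ≤ α i :=
    hα (Fin.le_def.2 (Nat.one_le_iff_ne_zero.2 fun h => hi (Fin.ext h)))
  have hsuff (t : ℝ) (ht : t ∈ Set.Ioo (max (2 * ν - 2 * α i₁) 0) (2 * ν - 2 * α i₀)) :=
    isLocalMin_and_not_forall_le_of_secularFun (α := α) (ψ := ψ) (ν := ν) (i₀ := i₀) (t := t)
      (by linarith [ht.2])
      fun i hi => by linarith [h₁ i hi, le_max_left (2 * ν - 2 * α i₁) 0, ht.1]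
  refine ⟨⟨fun ⟨w, hw, hng⟩ => ?_, fun ⟨t, ht, h0, h1⟩ => ⟨_, hsuff t ht h0 h1⟩⟩, hsuff⟩
  obtain ⟨t, ht, hc₀, hc₁, h0, h1⟩ := exists_secularFun_root_of_isLocalMin hi
    (fun i => hα (Fin.le_def.2 (Nat.zero_le _))) h₁ hw hng
  exact ⟨t, ⟨max_lt (by linarith) ht, by linarith⟩, h0, h1⟩
end

section
/- If w* is a global minimizer of g(w) = (1/2)((1/2)‖w‖² − ν)² + (1/2)wᵀDw − ψᵀw, then ψᵢ wᵢ* ≥ 0 for every index i. -/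
/-!
Flipping the sign of the `i`-th coordinate of `w` leaves every term of `g` depending only on the
squares `w j ^ 2` unchanged and raises the linear term by `2 ψ i w i`; global minimality of `w`
therefore forces `ψ i w i ≥ 0`.
-/

open Finset

section SignFlip

variable {ι R : Type*} [DecidableEq ι] [CommRing R]

lemma sq_update_neg_self (w : ι → R) (i j : ι) :
    Function.update w i (-w i) j ^ 2 = w j ^ 2 := by
  rcases eq_or_ne j i with rfl | hji
  · simp
  · rw [Function.update_of_ne hji]

lemma sum_mul_update_neg_self [Fintype ι] (ψ w : ι → R) (i : ι) :
    ∑ j, ψ j * Function.update w i (-w i) j = ∑ j, ψ j * w j - 2 * (ψ i * w i) := by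
  have hrest : ∑ j ∈ univ.erase i, ψ j * Function.update w i (-w i) j
      = ∑ j ∈ univ.erase i, ψ j * w j :=
    sum_congr rfl fun j hj => by rw [Function.update_of_ne (ne_of_mem_erase hj)]
  rw [← add_sum_erase _ _ (mem_univ i), ← add_sum_erase _ _ (mem_univ i), hrest,
    Function.update_self]
  ring

end SignFlip

theorem stmt10 {n : ℕ} (α ψ : Fin n → ℝ) (ν : ℝ)
    (g : (Fin n → ℝ) → ℝ)
    (hg : ∀ w, g w = (1/2) * ((1/2) * ∑ i, (w i)^2 - ν)^2
        + (1/2) * ∑ i, α i * (w i)^2 - ∑ i, ψ i * w i)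
    (w : Fin n → ℝ) (hglob : ∀ v, g w ≤ g v) :
    ∀ i, ψ i * w i ≥ 0 := by
  intro i
  have hflip := hglob (Function.update w i (-w i))
  simp only [hg, sq_update_neg_self, sum_mul_update_neg_self] at hflip
  linarith
end

section
/- If w̲ is a local non-global minimizer and w* is a global minimizer of g, then ψ₁ ≠ 0 and sign(ψ₁) = sign(w₁*) = −sign(w̲₁); in particular the first components of w̲ and w* are nonzero with opposite signs. -/
/-!
At a critical point `w` of `g`, with `λ = ½‖w‖² - ν`, the expansion
`g (w + d) = g w + ½ ∑ (λ + αᵢ) dᵢ² + ½ (⟨w, d⟩ + ½ ‖d‖²)²` is exact. Hence a critical point with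
`λ + α₁ ≥ 0` is a global minimizer, so the local non-global minimizer has `λ + α₁ < 0`; its first
coordinate cannot vanish, since moving along `e₁` would then decrease `g`, and so
`ψ₁ = (λ + α₁) w₁ ≠ 0`. At the global minimizer, flipping the sign of `w₁` keeps `‖w‖` and changes
`g` by `2 (λ + α₁) w₁²`, so there `λ + α₁ > 0`. Both signs are read off `ψ₁ = (λ + α₁) w₁`.
-/

open Finset Filter Topology

theorem Real.sign_mul_of_pos {c : ℝ} (hc : 0 < c) (x : ℝ) : Real.sign (c * x) = Real.sign x := by
  rcases lt_trichotomy x 0 with hx | rfl | hx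
  · rw [Real.sign_of_neg hx, Real.sign_of_neg (mul_neg_of_pos_of_neg hc hx)]
  · simp
  · rw [Real.sign_of_pos hx, Real.sign_of_pos (mul_pos hc hx)]

theorem IsLocalMin.comp_add_single {ι β : Type*} [Preorder β] [DecidableEq ι]
    {f : (ι → ℝ) → β} {w : ι → ℝ} (h : IsLocalMin f w) (i : ι) :
    IsLocalMin (fun t => f (w + Pi.single i t)) 0 :=
  IsLocalMin.comp_continuous (g := fun t => w + Pi.single i t) (by simpa using h)
    (continuous_const.add (continuous_single i)).continuousAt

section QuarticObjective

variable {ι : Type*} [Fintype ι] (α ψ : ι → ℝ) (ν : ℝ)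

noncomputable def quarticObj (w : ι → ℝ) : ℝ :=
  (1/2) * ((1/2) * ∑ i, (w i)^2 - ν)^2 + (1/2) * ∑ i, α i * (w i)^2 - ∑ i, ψ i * w i

noncomputable def quarticCoeff (w : ι → ℝ) (i : ι) : ℝ :=
  (1/2) * ∑ j, (w j)^2 - ν + α i

theorem quarticObj_add (w d : ι → ℝ) :
    quarticObj α ψ ν (w + d) = quarticObj α ψ ν w
      + ∑ i, (quarticCoeff α ν w i * w i - ψ i) * d i
      + (1/2) * ∑ i, quarticCoeff α ν w i * d i ^ 2
      + (1/2) * (∑ i, w i * d i + (1/2) * ∑ i, d i ^ 2) ^ 2 := by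
  simp only [quarticObj, quarticCoeff, Pi.add_apply, add_sq, add_mul, sub_mul, mul_add,
    sum_add_distrib, sum_sub_distrib, mul_assoc, mul_left_comm _ (2:ℝ), ← mul_sum]
  ring

theorem quarticObj_add_single [DecidableEq ι] (w : ι → ℝ) (i : ι) (t : ℝ) :
    quarticObj α ψ ν (w + Pi.single i t) = quarticObj α ψ ν w
      + (quarticCoeff α ν w i * w i - ψ i) * t + (1/2) * quarticCoeff α ν w i * t ^ 2
      + (1/2) * (w i * t + (1/2) * t ^ 2) ^ 2 := by
  simp [quarticObj_add, Pi.single_apply, mul_assoc]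

variable {α ψ ν}

theorem IsLocalMin.quarticCoeff_mul_eq {w : ι → ℝ} (h : IsLocalMin (quarticObj α ψ ν) w)
    (i : ι) : quarticCoeff α ν w i * w i = ψ i := by
  classical
  set c := quarticCoeff α ν w i
  have hslice := h.comp_add_single i
  simp only [quarticObj_add_single] at hslice
  have hderiv : HasDerivAt (fun t : ℝ => quarticObj α ψ ν w + (c * w i - ψ i) * t
      + (1/2) * c * t ^ 2 + (1/2) * (w i * t + (1/2) * t ^ 2) ^ 2) (c * w i - ψ i) 0 := by
    have hX := hasDerivAt_id' (0:ℝ)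
    have hquad := (hX.fun_pow 2).const_mul ((1:ℝ)/2)
    refine ((((hX.const_mul _).const_add _).fun_add ((hX.fun_pow 2).const_mul _)).fun_add
      ((((hX.const_mul (w i)).fun_add hquad).fun_pow 2).const_mul _)).congr_deriv ?_
    simp
  linarith [hslice.hasDerivAt_eq_zero hderiv]

theorem quarticObj_le_of_quarticCoeff_nonneg {w : ι → ℝ}
    (hstat : ∀ i, quarticCoeff α ν w i * w i = ψ i) (hcoeff : ∀ i, 0 ≤ quarticCoeff α ν w i)
    (v : ι → ℝ) : quarticObj α ψ ν w ≤ quarticObj α ψ ν v := by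
  have hexp := quarticObj_add α ψ ν w (v - w)
  simp only [add_sub_cancel, hstat, sub_self, zero_mul, sum_const_zero, add_zero] at hexp
  rw [hexp]
  have := sum_nonneg fun i (_ : i ∈ univ) => mul_nonneg (hcoeff i) (sq_nonneg ((v - w) i))
  nlinarith

theorem not_isLocalMin_quarticObj [DecidableEq ι] {w : ι → ℝ} {i : ι} (hwi : w i = 0)
    (hcoeff : quarticCoeff α ν w i < 0) : ¬ IsLocalMin (quarticObj α ψ ν) w := by
  intro h
  have hslice : ∀ᶠ t in 𝓝[≠] 0, quarticObj α ψ ν w ≤ quarticObj α ψ ν (w + Pi.single i t) := by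
    simpa [IsMinFilter] using (h.comp_add_single i).filter_mono nhdsWithin_le_nhds
  have hsmall : ∀ᶠ t in 𝓝[≠] (0:ℝ), t ≠ 0 ∧ t ^ 2 < -4 * quarticCoeff α ν w i := by
    have hsq : Tendsto (fun t : ℝ => t ^ 2) (𝓝 0) (𝓝 0) := by
      simpa using (continuous_pow 2).tendsto (0:ℝ)
    exact eventually_mem_nhdsWithin.and
      ((hsq.eventually (gt_mem_nhds (by linarith))).filter_mono nhdsWithin_le_nhds)
  obtain ⟨t, hle, ht0, ht⟩ := (hslice.and hsmall).exists
  rw [quarticObj_add_single, ← h.quarticCoeff_mul_eq i, hwi] at hle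
  have : 0 < t ^ 2 := by positivity
  nlinarith

theorem quarticCoeff_nonneg_of_isMin [DecidableEq ι] {w : ι → ℝ}
    (h : ∀ v, quarticObj α ψ ν w ≤ quarticObj α ψ ν v) {i : ι} (hwi : w i ≠ 0) :
    0 ≤ quarticCoeff α ν w i := by
  have hflip := h (w + Pi.single i (-2 * w i))
  rw [quarticObj_add_single, IsLocalMin.quarticCoeff_mul_eq (.of_forall h) i] at hflip
  have : 0 < w i ^ 2 := by positivity
  nlinarith

end QuarticObjective

theorem stmt12 {n : ℕ} (hn : 1 ≤ n) (α ψ : Fin n → ℝ) (hα : Monotone α) (ν : ℝ)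
    (g : (Fin n → ℝ) → ℝ)
    (hg : ∀ w, g w = (1/2) * ((1/2) * ∑ i, (w i)^2 - ν)^2
        + (1/2) * ∑ i, α i * (w i)^2 - ∑ i, ψ i * w i)
    (wl ws : Fin n → ℝ)
    (hl : IsLocalMin g wl) (hl' : ¬ ∀ v, g wl ≤ g v)
    (hs : ∀ v, g ws ≤ g v) :
    ψ ⟨0, hn⟩ ≠ 0 ∧ ws ⟨0, hn⟩ ≠ 0 ∧ wl ⟨0, hn⟩ ≠ 0 ∧
    Real.sign (ψ ⟨0, hn⟩) = Real.sign (ws ⟨0, hn⟩) ∧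
    Real.sign (ws ⟨0, hn⟩) = - Real.sign (wl ⟨0, hn⟩) := by
  obtain rfl : g = quarticObj α ψ ν := funext hg
  set i₀ : Fin n := ⟨0, hn⟩
  have hstat_l := hl.quarticCoeff_mul_eq
  have hstat_s := IsLocalMin.quarticCoeff_mul_eq (.of_forall hs)
  have hcoeff_l : quarticCoeff α ν wl i₀ < 0 := by
    by_contra! hnonneg
    refine hl' (quarticObj_le_of_quarticCoeff_nonneg hstat_l fun i => ?_)
    have : α i₀ ≤ α i := hα (Nat.zero_le i.val)
    unfold quarticCoeff at *
    linarith
  have hwl : wl i₀ ≠ 0 := fun h0 => not_isLocalMin_quarticObj h0 hcoeff_l hl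
  have hψ : ψ i₀ ≠ 0 := hstat_l i₀ ▸ mul_ne_zero hcoeff_l.ne hwl
  have hws : ws i₀ ≠ 0 := fun h0 => hψ (by rw [← hstat_s i₀, h0, mul_zero])
  have hcoeff_s : 0 < quarticCoeff α ν ws i₀ :=
    (quarticCoeff_nonneg_of_isMin hs hws).lt_of_ne fun h0 =>
      hψ (by rw [← hstat_s i₀, ← h0, zero_mul])
  have hsign_l : Real.sign (ψ i₀) = -Real.sign (wl i₀) := by
    rw [← hstat_l i₀, ← neg_neg (quarticCoeff α ν wl i₀), neg_mul, Real.sign_neg,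
      Real.sign_mul_of_pos (neg_pos.2 hcoeff_l)]
  have hsign_s : Real.sign (ψ i₀) = Real.sign (ws i₀) := by
    rw [← hstat_s i₀, Real.sign_mul_of_pos hcoeff_s]
  exact ⟨hψ, hws, hwl, hsign_s, hsign_s ▸ hsign_l⟩
end

section
/- If w̄ is a local maximizer of g(w) = (1/2)((1/2)‖w‖² − ν)² + (1/2)wᵀDw − ψᵀw, then for each index i, ψᵢ = 0 if and only if w̄ᵢ = 0. -/
/-!
Along the coordinate line through `w̄` in direction `eᵢ`, `g` is a quartic
`t ↦ t⁴/8 + (b/2) t² - ψᵢ t + c`. Criticality gives `w̄ᵢ³/2 + b w̄ᵢ = ψᵢ`, so `w̄ᵢ = 0` forces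
`ψᵢ = 0`. Conversely, if `ψᵢ = 0` but `w̄ᵢ ≠ 0`, then `b = -w̄ᵢ²/2` and the quartic equals
`(t² - w̄ᵢ²)²/8` up to a constant, so `w̄ᵢ` would be a local minimum of it, not a local maximum.
-/

open Finset Function

lemma Fintype.sum_apply_update {ι β M : Type*} [Fintype ι] [DecidableEq ι] [AddCommMonoid M]
    (F : ι → β → M) (w : ι → β) (i : ι) (t : β) :
    ∑ j, F j (update w i t j) = F i t + ∑ j ∈ univ.erase i, F j (w j) := by
  rw [← add_sum_erase _ _ (mem_univ i), update_self]
  congr 1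
  exact Finset.sum_congr rfl fun j hj => by rw [update_of_ne (ne_of_mem_erase hj)]

lemma IsLocalMax.comp_update {ι β : Type*} [DecidableEq ι] {π : ι → Type*}
    [∀ i, TopologicalSpace (π i)] [Preorder β] {f : (∀ i, π i) → β} {w : ∀ i, π i}
    (h : IsLocalMax f w) (i : ι) : IsLocalMax (fun t => f (update w i t)) (w i) := by
  have h' : IsLocalMax f (update w i (w i)) := by rwa [update_eq_self]
  exact h'.comp_continuous (continuous_const.update i continuous_id).continuousAt

lemma hasDerivAt_quartic (b p c x : ℝ) :
    HasDerivAt (fun t => t ^ 4 / 8 + b / 2 * t ^ 2 - p * t + c) (x ^ 3 / 2 + b * x - p) x := by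
  have h := ((((hasDerivAt_pow 4 x).div_const 8).add
    ((hasDerivAt_pow 2 x).const_mul (b / 2))).sub ((hasDerivAt_id x).const_mul p)).add_const c
  exact h.congr_deriv (by norm_num; ring)

lemma eq_zero_iff_of_isLocalMax_quartic {b p c x : ℝ}
    (h : IsLocalMax (fun t => t ^ 4 / 8 + b / 2 * t ^ 2 - p * t + c) x) : p = 0 ↔ x = 0 := by
  have hcrit : x ^ 3 / 2 + b * x - p = 0 := h.hasDerivAt_eq_zero (hasDerivAt_quartic b p c x)
  refine ⟨fun hp => ?_, fun hx => by simpa [hx] using hcrit⟩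
  by_contra hx
  have hb : b = -x ^ 2 / 2 := by
    have : x * (x ^ 2 / 2 + b) = 0 := by linear_combination hcrit + hp
    linear_combination (mul_eq_zero.mp this).resolve_left hx
  have hsq : IsLocalMax (fun t : ℝ => t ^ 2) x := by
    filter_upwards [h] with t ht
    have : (t ^ 2 - x ^ 2) ^ 2 ≤ 0 := by
      subst hp hb
      linear_combination 8 * ht
    have : t ^ 2 - x ^ 2 = 0 := pow_eq_zero_iff two_ne_zero |>.mp (le_antisymm this (sq_nonneg _))
    linarith
  have := hsq.hasDerivAt_eq_zero (hasDerivAt_pow 2 x)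
  exact hx (by simpa using this)

theorem stmt13_general {n : ℕ} (α ψ : Fin n → ℝ) (ν : ℝ)
    (g : (Fin n → ℝ) → ℝ)
    (hg : ∀ w, g w = (1/2) * ((1/2) * ∑ i, (w i)^2 - ν)^2
        + (1/2) * ∑ i, α i * (w i)^2 - ∑ i, ψ i * w i)
    (w : Fin n → ℝ) (hmax : IsLocalMax g w) :
    ∀ i, ψ i = 0 ↔ w i = 0 := by
  intro i
  set S := ∑ j ∈ univ.erase i, w j ^ 2
  set A := ∑ j ∈ univ.erase i, α j * w j ^ 2
  set P := ∑ j ∈ univ.erase i, ψ j * w j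
  have hline : (fun t => g (update w i t)) = fun t =>
      t ^ 4 / 8 + (S / 2 - ν + α i) / 2 * t ^ 2 - ψ i * t + ((S / 2 - ν) ^ 2 / 2 + A / 2 - P) := by
    funext t
    rw [hg, Fintype.sum_apply_update (fun _ x => x ^ 2),
      Fintype.sum_apply_update (fun j x => α j * x ^ 2),
      Fintype.sum_apply_update (fun j x => ψ j * x)]
    ring
  exact eq_zero_iff_of_isLocalMax_quartic (hline ▸ hmax.comp_update i)

theorem stmt13 {n : ℕ} (α ψ : Fin n → ℝ) (hα : Monotone α) (ν : ℝ)
    (g : (Fin n → ℝ) → ℝ)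
    (hg : ∀ w, g w = (1/2) * ((1/2) * ∑ i, (w i)^2 - ν)^2
        + (1/2) * ∑ i, α i * (w i)^2 - ∑ i, ψ i * w i)
    (w : Fin n → ℝ) (hmax : IsLocalMax g w) :
    ∀ i, ψ i = 0 ↔ w i = 0 :=
  stmt13_general α ψ ν g hg w hmax
end

section
/- If ν − αₙ > 0 and ψ = 0, then w̄ = 0 is the unique local maximizer of g(w) = (1/2)((1/2)‖w‖² − ν)² + (1/2)wᵀDw. -/
/-!
Near `0`, the bound `∑ αᵢ wᵢ² ≤ αₙ ‖w‖²` gives `g w - g 0 ≤ ‖w‖² (‖w‖² - 4 (ν - αₙ)) / 8 ≤ 0`.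
For `w ≠ 0`, along the curve `u ↦ √u • w` the function `g` is a quadratic in `u` with leading
coefficient `‖w‖⁴ / 8 > 0`, hence strictly convex, and a strictly convex function has no local
maximum; since the curve passes through `w` at `u = 1`, `w` is not a local maximizer either.
-/

open Finset Filter Topology

theorem StrictConvexOn.not_isLocalMax {E : Type*} [AddCommGroup E] [Module ℝ E]
    [TopologicalSpace E] [ContinuousAdd E] [ContinuousSMul ℝ E] [Nontrivial E]
    {s : Set E} {f : E → ℝ} {x : E} (hf : StrictConvexOn ℝ s f) (hs : s ∈ 𝓝 x) :
    ¬ IsLocalMax f x := by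
  intro hmax
  obtain ⟨v, hv⟩ := exists_ne (0 : E)
  have hline : Tendsto (fun t : ℝ => x + t • v) (𝓝 0) (𝓝 x) := by
    have hcont : Continuous (fun t : ℝ => x + t • v) := by fun_prop
    simpa using hcont.tendsto 0
  have hgood : ∀ᶠ t in 𝓝 (0 : ℝ), x + t • v ∈ s ∧ f (x + t • v) ≤ f x :=
    hline.eventually (Filter.inter_mem hs hmax)
  have hgood' : ∀ᶠ t in 𝓝 (0 : ℝ), x + (-t) • v ∈ s ∧ f (x + (-t) • v) ≤ f x :=
    (continuous_neg.tendsto' (0 : ℝ) 0 neg_zero).eventually hgood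
  obtain ⟨t, ⟨⟨hs₁, hf₁⟩, hs₂, hf₂⟩, ht⟩ :=
    ((hgood.and hgood').filter_mono nhdsWithin_le_nhds).and
      (self_mem_nhdsWithin : {t : ℝ | t ≠ 0} ∈ 𝓝[≠] 0) |>.exists
  have hne : x + t • v ≠ x + (-t) • v := by
    simpa [eq_neg_iff_add_eq_zero, ← two_smul ℝ, hv] using ht
  have hmid := hf.2 hs₁ hs₂ hne (by norm_num : (0 : ℝ) < 1 / 2) (by norm_num : (0 : ℝ) < 1 / 2)
    (by norm_num)
  rw [show (1 / 2 : ℝ) • (x + t • v) + (1 / 2 : ℝ) • (x + (-t) • v) = x by module] at hmid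
  simp only [smul_eq_mul] at hmid
  linarith

theorem strictConvexOn_quadratic {a : ℝ} (ha : 0 < a) (b c : ℝ) :
    StrictConvexOn ℝ Set.univ (fun x => a * x ^ 2 + b * x + c) := by
  refine ⟨convex_univ, fun x _ y _ hxy p q hp hq hpq => ?_⟩
  have hgap : 0 < (x - y) ^ 2 := by positivity
  obtain rfl : q = 1 - p := by linarith
  simp only [smul_eq_mul]
  -- the convexity gap `p f x + q f y - f (p x + q y)` equals `a p q (x - y)²`
  nlinarith [mul_pos (mul_pos hp hq) (mul_pos ha hgap)]

section QuarticPotential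

variable {ι : Type*} [Fintype ι]

noncomputable def quarticPotential (α : ι → ℝ) (ν : ℝ) (w : ι → ℝ) : ℝ :=
  (1/2) * ((1/2) * ∑ i, (w i)^2 - ν)^2 + (1/2) * ∑ i, α i * (w i)^2

theorem sum_mul_sq_le_mul_sum_sq {α : ι → ℝ} {A : ℝ} (hα : ∀ i, α i ≤ A) (w : ι → ℝ) :
    ∑ i, α i * w i ^ 2 ≤ A * ∑ i, w i ^ 2 := by
  rw [mul_sum]
  exact sum_le_sum fun i _ => mul_le_mul_of_nonneg_right (hα i) (sq_nonneg _)

theorem quarticPotential_isLocalMax_zero {α : ι → ℝ} {ν A : ℝ} (hα : ∀ i, α i ≤ A) (hA : A < ν) :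
    IsLocalMax (quarticPotential α ν) 0 := by
  have hsmall : ∀ᶠ w in 𝓝 (0 : ι → ℝ), ∑ i, w i ^ 2 < 4 * (ν - A) := by
    refine (continuous_finsetSum _ fun i _ => (continuous_apply i).pow 2).continuousAt.eventually_lt continuousAt_const ?_
    simpa using (by linarith : (0 : ℝ) < 4 * (ν - A))
  filter_upwards [hsmall] with w hw
  have hs : 0 ≤ ∑ i, w i ^ 2 := sum_nonneg fun i _ => sq_nonneg _
  calc quarticPotential α ν w
      ≤ (1/2) * ((1/2) * ∑ i, w i ^ 2 - ν) ^ 2 + (1/2) * (A * ∑ i, w i ^ 2) := by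
        unfold quarticPotential
        linarith [sum_mul_sq_le_mul_sum_sq hα w]
    _ = (1/2) * ν ^ 2 + (∑ i, w i ^ 2) * (∑ i, w i ^ 2 - 4 * (ν - A)) / 8 := by ring
    _ ≤ (1/2) * ν ^ 2 := by linarith [mul_nonpos_of_nonneg_of_nonpos hs (sub_nonpos.2 hw.le)]
    _ = quarticPotential α ν 0 := by simp [quarticPotential]

theorem quarticPotential_sqrt_smul (α : ι → ℝ) (ν : ℝ) (w : ι → ℝ) {u : ℝ} (hu : 0 ≤ u) :
    quarticPotential α ν (√u • w) = (∑ i, w i ^ 2) ^ 2 / 8 * u ^ 2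
      + ((∑ i, α i * w i ^ 2) - ν * ∑ i, w i ^ 2) / 2 * u + ν ^ 2 / 2 := by
  have hsq : ∀ i, (√u • w) i ^ 2 = u * w i ^ 2 := fun i => by
    rw [Pi.smul_apply, smul_eq_mul, mul_pow, Real.sq_sqrt hu]
  simp only [quarticPotential, hsq, ← mul_sum, mul_left_comm (α _) u]
  ring

theorem quarticPotential_not_isLocalMax (α : ι → ℝ) (ν : ℝ) {w : ι → ℝ} (hw : w ≠ 0) :
    ¬ IsLocalMax (quarticPotential α ν) w := by
  intro hmax
  have hs : 0 < ∑ i, w i ^ 2 := by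
    obtain ⟨i, hi⟩ := Function.ne_iff.1 hw
    exact sum_pos' (fun j _ => sq_nonneg _) ⟨i, mem_univ _, pow_two_pos_of_ne_zero hi⟩
  have hradial : IsLocalMax (quarticPotential α ν ∘ fun u : ℝ => √u • w) 1 :=
    IsLocalMax.comp_continuous (by simpa using hmax) (by fun_prop)
  refine (strictConvexOn_quadratic (div_pos (pow_pos hs 2) (by norm_num : (0 : ℝ) < 8))
    (((∑ i, α i * w i ^ 2) - ν * ∑ i, w i ^ 2) / 2) (ν ^ 2 / 2)).not_isLocalMax univ_mem
    (hradial.congr ?_)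
  filter_upwards [lt_mem_nhds zero_lt_one] with u hu
  exact quarticPotential_sqrt_smul α ν w hu.le

end QuarticPotential

theorem stmt15 {n : ℕ} (hn : 1 ≤ n) (α : Fin n → ℝ) (hα : Monotone α) (ν : ℝ)
    (hν : 0 < ν - α ⟨n - 1, by omega⟩)
    (g : (Fin n → ℝ) → ℝ)
    (hg : ∀ w, g w = (1/2) * ((1/2) * ∑ i, (w i)^2 - ν)^2
        + (1/2) * ∑ i, α i * (w i)^2) :
    IsLocalMax g 0 ∧ ∀ w : Fin n → ℝ, IsLocalMax g w → w = 0 := by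
  obtain rfl : g = quarticPotential α ν := funext hg
  have hαtop : ∀ i, α i ≤ α ⟨n - 1, by omega⟩ := fun i => hα (Nat.le_sub_one_of_lt i.isLt)
  exact ⟨quarticPotential_isLocalMax_zero hαtop (by linarith),
    fun w hw => not_not.1 fun hw0 => quarticPotential_not_isLocalMax α ν hw0 hw⟩
end

section
/- For the one-dimensional function g(w) = (1/2)((1/2)w² − ν)² + (α/2)w² − ψw with ψ ≠ 0: if t₁ = w̲² and t₂ = w̄² are squares of a local minimizer w̲ and a local maximizer w̄ respectively, both being roots of h(t) = 4ψ²/(t − 2ν + 2α)² − t with h'(t₁) ≥ 0 and h'(t₂) ≤ 0, then w̄² < w̲². -/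
/-!
Write `c = 2ν - 2a`. A critical point `w` of `g` satisfies `2ψ = w (w² - c)`, and expanding `g`
around it gives `g x - g w = (x - w)² ((x - w)² + 4w (x - w) + 2 (3w² - c)) / 8`. If `3w² ≥ c`,
this is positive for every `x ≠ w` on the side of `w` away from `0`, so a local maximizer has
`3w̄² < c`. At a critical point `4ψ² = w² (w² - c)²`, so `h'(w²) = -2w² / (w² - c) - 1`, and
`h'(w̲²) ≥ 0` forces `w̲² < c ≤ 3w̲²`.
-/

open Filter Topology

noncomputable def tiltedDoubleWell (ν a ψ w : ℝ) : ℝ :=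
  (1/2) * ((1/2) * w^2 - ν)^2 + (a/2) * w^2 - ψ * w

section TiltedDoubleWell

variable {ν a ψ : ℝ}

theorem hasDerivAt_tiltedDoubleWell (w : ℝ) :
    HasDerivAt (tiltedDoubleWell ν a ψ) ((1/2) * w^3 - (ν - a) * w - ψ) w := by
  have hpoly := ((((((hasDerivAt_id w).pow 2).const_mul (1/2 : ℝ)).sub_const ν).pow 2).const_mul
    (1/2 : ℝ)).add (((hasDerivAt_id w).pow 2).const_mul (a/2))
    |>.sub ((hasDerivAt_id w).const_mul ψ)
  refine hpoly.congr_deriv ?_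
  simp only [id_eq, Pi.pow_apply]
  push_cast
  ring

theorem two_mul_eq_of_isLocalExtr {w : ℝ} (hw : IsLocalExtr (tiltedDoubleWell ν a ψ) w) :
    2 * ψ = w * (w^2 - (2*ν - 2*a)) := by
  linear_combination -2 * hw.hasDerivAt_eq_zero (hasDerivAt_tiltedDoubleWell w)

theorem tiltedDoubleWell_sub_eq_of_crit {w : ℝ} (hcrit : 2 * ψ = w * (w^2 - (2*ν - 2*a))) (x : ℝ) :
    tiltedDoubleWell ν a ψ x - tiltedDoubleWell ν a ψ w
      = (x - w)^2 * ((x - w)^2 + 4 * w * (x - w) + 2 * (3 * w^2 - (2*ν - 2*a))) / 8 := by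
  unfold tiltedDoubleWell
  linear_combination (-(x - w) / 2) * hcrit

theorem tiltedDoubleWell_lt_of_crit {w x : ℝ} (hcrit : 2 * ψ = w * (w^2 - (2*ν - 2*a)))
    (hconvex : 2*ν - 2*a ≤ 3 * w^2) (hx : x ≠ w) (hside : 0 ≤ w * (x - w)) :
    tiltedDoubleWell ν a ψ w < tiltedDoubleWell ν a ψ x := by
  have hsq : 0 < (x - w)^2 := by have := sub_ne_zero.2 hx; positivity
  rw [← sub_pos, tiltedDoubleWell_sub_eq_of_crit hcrit]
  have hquad : 0 < (x - w)^2 + 4 * w * (x - w) + 2 * (3 * w^2 - (2*ν - 2*a)) := by nlinarith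
  positivity

theorem three_mul_sq_lt_of_isLocalMax {w : ℝ} (hw : IsLocalMax (tiltedDoubleWell ν a ψ) w) :
    3 * w^2 < 2*ν - 2*a := by
  have hcrit := two_mul_eq_of_isLocalExtr (Or.inr hw)
  by_contra! hconvex
  rcases le_total 0 w with hw0 | hw0
  · obtain ⟨x, hle, hx⟩ :=
      ((hw.filter_mono nhdsWithin_le_nhds).and (self_mem_nhdsWithin (s := Set.Ioi w))).exists
    exact (tiltedDoubleWell_lt_of_crit hcrit hconvex (ne_of_gt hx)
      (mul_nonneg hw0 (sub_nonneg.2 (le_of_lt hx)))).not_ge hle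
  · obtain ⟨x, hle, hx⟩ :=
      ((hw.filter_mono nhdsWithin_le_nhds).and (self_mem_nhdsWithin (s := Set.Iio w))).exists
    exact (tiltedDoubleWell_lt_of_crit hcrit hconvex (ne_of_lt hx)
      (mul_nonneg_of_nonpos_of_nonpos hw0 (sub_nonpos.2 (le_of_lt hx)))).not_ge hle

end TiltedDoubleWell

theorem hasDerivAt_sq_pole_sub_id (ψ c : ℝ) {t : ℝ} (ht : t ≠ c) :
    HasDerivAt (fun t => 4 * ψ^2 / (t - c)^2 - t) (-8 * ψ^2 / (t - c)^3 - 1) t := by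
  have hpole := (hasDerivAt_const t (4 * ψ^2)).div (((hasDerivAt_id t).sub_const c).pow 2)
    (pow_ne_zero 2 (sub_ne_zero.2 ht)) |>.sub (hasDerivAt_id t)
  refine hpole.congr_deriv ?_
  have htc : t - c ≠ 0 := sub_ne_zero.2 ht
  simp only [id_eq, Pi.pow_apply]
  field_simp
  ring

theorem le_three_mul_sq_of_deriv_nonneg {ψ c w : ℝ} (hψ : ψ ≠ 0) (hcrit : 2 * ψ = w * (w^2 - c))
    (hderiv : 0 ≤ deriv (fun t => 4 * ψ^2 / (t - c)^2 - t) (w^2)) : c ≤ 3 * w^2 := by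
  have hd : w^2 - c ≠ 0 := fun h0 => hψ (by linear_combination hcrit / 2 + w * h0 / 2)
  rw [(hasDerivAt_sq_pole_sub_id ψ c (sub_ne_zero.1 hd)).deriv] at hderiv
  have hψsq : 8 * ψ^2 = 2 * w^2 * (w^2 - c)^2 := by
    linear_combination 2 * (2 * ψ + w * (w^2 - c)) * hcrit
  have hslope : -8 * ψ^2 / (w^2 - c)^3 = 2 * w^2 / (c - w^2) := by
    have hd' : c - w^2 ≠ 0 := fun h0 => hd (by linear_combination -h0)
    rw [neg_mul, hψsq]
    field_simp
    ring
  rw [hslope] at hderiv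
  rcases lt_or_gt_of_ne hd with hneg | hpos
  · have hden : 0 < c - w^2 := by linarith
    rw [sub_nonneg, one_le_div hden] at hderiv
    linarith
  · have : 2 * w^2 / (c - w^2) ≤ 0 := div_nonpos_of_nonneg_of_nonpos (by positivity) (by linarith)
    linarith

theorem stmt19_general (ν a ψ : ℝ) (hψ : ψ ≠ 0)
    (g : ℝ → ℝ)
    (hg : ∀ w, g w = (1/2) * ((1/2) * w^2 - ν)^2 + (a/2) * w^2 - ψ * w)
    (h : ℝ → ℝ)
    (hh : ∀ t, h t = 4 * ψ^2 / (t - 2 * ν + 2 * a)^2 - t)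
    (wl wm : ℝ) (hl : IsLocalMin g wl) (hm : IsLocalMax g wm)
    (hd1 : 0 ≤ deriv h (wl^2)) :
    wm^2 < wl^2 := by
  obtain rfl : g = tiltedDoubleWell ν a ψ := funext hg
  obtain rfl : h = fun t => 4 * ψ^2 / (t - (2*ν - 2*a))^2 - t := funext fun t => by
    rw [hh]; ring_nf
  have hlow := le_three_mul_sq_of_deriv_nonneg hψ (two_mul_eq_of_isLocalExtr (Or.inl hl)) hd1
  have hup := three_mul_sq_lt_of_isLocalMax hm
  linarith

theorem stmt19 (ν a ψ : ℝ) (hψ : ψ ≠ 0)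
    (g : ℝ → ℝ)
    (hg : ∀ w, g w = (1/2) * ((1/2) * w^2 - ν)^2 + (a/2) * w^2 - ψ * w)
    (h : ℝ → ℝ)
    (hh : ∀ t, h t = 4 * ψ^2 / (t - 2 * ν + 2 * a)^2 - t)
    (wl wm : ℝ) (hl : IsLocalMin g wl) (hm : IsLocalMax g wm)
    (ht1 : h (wl^2) = 0) (ht2 : h (wm^2) = 0)
    (hd1 : 0 ≤ deriv h (wl^2)) (hd2 : deriv h (wm^2) ≤ 0) :
    wm^2 < wl^2 :=
  stmt19_general ν a ψ hψ g hg h hh wl wm hl hm hd1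
end
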